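/- Let G be a finite simple connected graph with A(G) ≠ ∅ and md(G*) = 1, and let N₁ be a single matching of G* that covers D*. Then there exist a maximum matching M of G with V(N₁) ⊆ V(M) and a matching N of the induced subgraph G[D(G)] such that M ∪ N is an optimal matching cover of G (so M ∪ N covers V(G) and mc(G) = 2). -/

import Mathlib

variable {V : Type*}

/-- The set of vertices covered by a set of edges. -/
def edgeCover (M : Finset (Sym2 V)) : Set V := {v | ∃ e ∈ M, v ∈ e}

/-- `M` is a matching of `G`: a set of pairwise disjoint edges of `G`. -/
def IsMatchingSet (G : SimpleGraph V) (M : Finset (Sym2 V)) : Prop :=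
  (∀ e ∈ M, e ∈ G.edgeSet) ∧
    ∀ e ∈ M, ∀ f ∈ M, e ≠ f → ∀ v : V, v ∈ e → v ∉ f

/-- `M` is a maximum matching of `G`. -/
def IsMaximumMatchingSet (G : SimpleGraph V) (M : Finset (Sym2 V)) : Prop :=
  IsMatchingSet G M ∧ ∀ N : Finset (Sym2 V), IsMatchingSet G N → N.card ≤ M.card

variable [Fintype V] [DecidableEq V]

/-- `M` is a `k`-matching cover of `G`: a union of `k` matchings of `G` covering `V(G)`. -/
def IsKMatchingCover (G : SimpleGraph V) (k : ℕ) (M : Finset (Sym2 V)) : Prop :=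
  (∃ f : Fin k → Finset (Sym2 V), (∀ i, IsMatchingSet G (f i)) ∧
      M = Finset.univ.biUnion f) ∧
    ∀ v : V, v ∈ edgeCover M

/-- The matching cover number `mc(G)`. -/
noncomputable def mc (G : SimpleGraph V) : ℕ :=
  sInf {k | ∃ M : Finset (Sym2 V), IsKMatchingCover G k M}

/-- `M` is a `k`-matching `D`-cover of `G`: a union of `k` matchings of `G` covering `D`. -/
def IsKMatchingDCover (G : SimpleGraph V) (D : Set V) (k : ℕ)
    (M : Finset (Sym2 V)) : Prop :=
  (∃ f : Fin k → Finset (Sym2 V), (∀ i, IsMatchingSet G (f i)) ∧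
      M = Finset.univ.biUnion f) ∧
    ∀ v ∈ D, v ∈ edgeCover M

/-- The matching `D`-cover number `md(G)`. -/
noncomputable def md (G : SimpleGraph V) (D : Set V) : ℕ :=
  sInf {k | ∃ M : Finset (Sym2 V), IsKMatchingDCover G D k M}

/-- The Gallai–Edmonds set `D(G)`: vertices missed by some maximum matching. -/
def Dset (G : SimpleGraph V) : Set V :=
  {v | ∃ M : Finset (Sym2 V), IsMaximumMatchingSet G M ∧ v ∉ edgeCover M}

/-- The Gallai–Edmonds set `A(G) = N_G(D(G))`. -/
def Aset (G : SimpleGraph V) : Set V :=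
  {v | v ∉ Dset G ∧ ∃ u ∈ Dset G, G.Adj u v}

/-- The Gallai–Edmonds set `C(G) = V(G) \ (A(G) ∪ D(G))`. -/
def Cset (G : SimpleGraph V) : Set V :=
  {v | v ∉ Dset G ∧ v ∉ Aset G}

/-- The induced subgraph `G[s]`, viewed as a graph on the same vertex type. -/
def indOn (G : SimpleGraph V) (s : Set V) : SimpleGraph V where
  Adj a b := a ∈ s ∧ b ∈ s ∧ G.Adj a b
  symm := ⟨by rintro a b ⟨ha, hb, h⟩; exact ⟨hb, ha, h.symm⟩⟩
  loopless := ⟨by rintro a ⟨-, -, h⟩; exact G.ne_of_adj h rfl⟩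

/-- `D*`: the set of isolated vertices of `G[D(G)]`. -/
def DstarSet (G : SimpleGraph V) : Set V :=
  {v | v ∈ Dset G ∧ ∀ u : V, ¬ (indOn G (Dset G)).Adj v u}

/-- The bipartite graph `G*`, obtained from `G` by deleting the nontrivial components of
`G[D(G)]`, the vertices of `C(G)`, and the edges spanned by `A(G)`: its edges are exactly
the edges of `G` joining `A(G)` and `D*`. -/
def Gstar (G : SimpleGraph V) : SimpleGraph V where
  Adj a b := G.Adj a b ∧
    ((a ∈ Aset G ∧ b ∈ DstarSet G) ∨ (a ∈ DstarSet G ∧ b ∈ Aset G))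
  symm := ⟨by rintro a b ⟨h, hc⟩; exact ⟨h.symm, by tauto⟩⟩
  loopless := ⟨by rintro a ⟨h, -⟩; exact G.ne_of_adj h rfl⟩

open Classical in
/-- The degree of `v` in the edge set `M`; this is the degree of `v` in `G[M]+A`
(vertices not covered by `M` have degree `0`). -/
noncomputable def degM (M : Finset (Sym2 V)) (v : V) : ℕ :=
  (M.filter fun e => v ∈ e).card

/-- The maximum degree `Δ(G[M]+A)`. -/
noncomputable def maxDegPlus (M : Finset (Sym2 V)) : ℕ :=
  Finset.univ.sup fun v : V => degM M v

/-- `w` is a maximum center of `M` (all vertices of `A` being regarded as centers). -/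
def IsMaximumCenter (A : Set V) (M : Finset (Sym2 V)) (w : V) : Prop :=
  w ∈ A ∧ degM M w = maxDegPlus M

/-- `(A, D)` is a bipartition of `G`. -/
def IsBipartition (G : SimpleGraph V) (A D : Set V) : Prop :=
  Disjoint A D ∧ A ∪ D = Set.univ ∧
    ∀ a b : V, G.Adj a b → (a ∈ A ∧ b ∈ D) ∨ (a ∈ D ∧ b ∈ A)

/-- A matching `D`-cover of `G`, recorded as an edge set
(a union of matchings of `G` covering `D`). -/
def IsMDCoverSet (G : SimpleGraph V) (D : Set V) (M : Finset (Sym2 V)) : Prop :=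
  ∃ k, IsKMatchingDCover G D k M

/-- A minimal matching `D`-cover: no proper subset is a matching `D`-cover. -/
def IsMinimalMDCover (G : SimpleGraph V) (D : Set V) (M : Finset (Sym2 V)) : Prop :=
  IsMDCoverSet G D M ∧ ∀ M' ⊂ M, ¬ IsMDCoverSet G D M'

/-- The graph `G[M]` spanned by an edge set, on the same vertex type. -/
def fromEdges (M : Finset (Sym2 V)) : SimpleGraph V where
  Adj a b := a ≠ b ∧ s(a, b) ∈ M
  symm := ⟨by rintro a b ⟨hne, h⟩; exact ⟨hne.symm, by rwa [Sym2.eq_swap]⟩⟩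
  loopless := ⟨by rintro a ⟨hne, -⟩; exact hne rfl⟩

/-- The connected component of `v` in `G[M]` is a star with center `c`:
every vertex of the component is `c` or a neighbour of `c`, and every edge of the
component is incident with `c`. -/
def StarCenteredAt (M : Finset (Sym2 V)) (c v : V) : Prop :=
  (fromEdges M).Reachable c v ∧
    (∀ u : V, (fromEdges M).Reachable u v → u = c ∨ (fromEdges M).Adj c u) ∧
    ∀ e ∈ M, (∃ x, x ∈ e ∧ (fromEdges M).Reachable x v) → c ∈ e

/-- Every component of `G[M]` is a star whose center lies in `A`. -/
def CentersInA (A : Set V) (M : Finset (Sym2 V)) : Prop :=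
  ∀ v ∈ edgeCover M, ∃ c ∈ A, StarCenteredAt M c v

/-- `w` is an `M`-switching path: an `M`-alternating path (starting at a maximum center
with an edge of `M`, vertices alternately centers in `A` and ends, edges alternately in
`M` and outside `M`) ending at a center `v` with `d(u) ≥ d(v) + 2`. -/
def IsSwitchingPath (G : SimpleGraph V) (A : Set V) (M : Finset (Sym2 V))
    (n : ℕ) (w : Fin (n + 1) → V) : Prop :=
  0 < n ∧ Function.Injective w ∧
    (∀ i : Fin n, G.Adj (w i.castSucc) (w i.succ)) ∧
    (∀ i : Fin n, (s(w i.castSucc, w i.succ) ∈ M ↔ Even (i : ℕ))) ∧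
    (∀ i : Fin (n + 1), w i ∈ A ↔ Even (i : ℕ)) ∧
    w (Fin.last n) ∈ A ∧
    IsMaximumCenter A M (w 0) ∧
    degM M (w (Fin.last n)) + 2 ≤ degM M (w 0)

/-- There is an `M`-switching path from `u` to `v` in `G`. -/
def ExistsSwitchingPath (G : SimpleGraph V) (A : Set V) (M : Finset (Sym2 V))
    (u v : V) : Prop :=
  ∃ (n : ℕ) (w : Fin (n + 1) → V),
    IsSwitchingPath G A M n w ∧ w 0 = u ∧ w (Fin.last n) = v

/-- The edge set of the path `w 0, w 1, …, w n`. -/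
def pathEdges (n : ℕ) (w : Fin (n + 1) → V) : Finset (Sym2 V) :=
  Finset.univ.image fun i : Fin n => s(w i.castSucc, w i.succ)


set_option linter.unusedSectionVars false
set_option linter.unusedVariables false
set_option maxHeartbeats 1000000

open Finset

/-- nice edge sets: nondiagonal and pairwise disjoint edges -/
def NiceSet (M : Finset (Sym2 V)) : Prop :=
  (∀ e ∈ M, ¬ e.IsDiag) ∧ ∀ e ∈ M, ∀ f ∈ M, e ≠ f → ∀ v : V, v ∈ e → v ∉ f

lemma IsMatchingSet.nice {G : SimpleGraph V} {M : Finset (Sym2 V)}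
    (h : IsMatchingSet G M) : NiceSet M :=
  ⟨fun e he => G.not_isDiag_of_mem_edgeSet (h.1 e he), h.2⟩

lemma mem_edgeCover {M : Finset (Sym2 V)} {v : V} :
    v ∈ edgeCover M ↔ ∃ w, s(v, w) ∈ M := by
  constructor
  · rintro ⟨e, he, hv⟩
    obtain ⟨w, rfl⟩ := Sym2.mem_iff_exists.1 hv
    exact ⟨w, he⟩
  · rintro ⟨w, hw⟩
    exact ⟨s(v, w), hw, Sym2.mem_mk_left _ _⟩

lemma partner_unique {M : Finset (Sym2 V)} (hM : NiceSet M) {v a b : V}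
    (ha : s(v, a) ∈ M) (hb : s(v, b) ∈ M) : a = b := by
  by_cases h : (s(v, a) : Sym2 V) = s(v, b)
  · rcases Sym2.eq_iff.1 h with ⟨-, h⟩ | ⟨h1, h2⟩
    · exact h
    · exact h2.trans h1
  · exact absurd (Sym2.mem_mk_left v b) (hM.2 _ ha _ hb h v (Sym2.mem_mk_left v a))

noncomputable def pt (M : Finset (Sym2 V)) (v : V) : V :=
  if h : ∃ w, s(v, w) ∈ M then h.choose else v

lemma pt_mem {M : Finset (Sym2 V)} {v : V} (h : ∃ w, s(v, w) ∈ M) :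
    s(v, pt M v) ∈ M := by
  rw [pt, dif_pos h]; exact h.choose_spec

lemma pt_eq {M : Finset (Sym2 V)} (hM : NiceSet M) {v w : V}
    (h : s(v, w) ∈ M) : pt M v = w :=
  partner_unique hM (pt_mem ⟨w, h⟩) h

open Classical in
/-- cover as a Finset -/
noncomputable def covF (M : Finset (Sym2 V)) : Finset V :=
  univ.filter (· ∈ edgeCover M)

lemma mem_covF {M : Finset (Sym2 V)} {v : V} : v ∈ covF M ↔ v ∈ edgeCover M := by
  classical simp [covF]

lemma covF_card {M : Finset (Sym2 V)} (hM : NiceSet M) :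
    (covF M).card = 2 * M.card := by
  classical
  have : covF M = M.biUnion (fun e => univ.filter (· ∈ e)) := by
    ext v
    simp only [mem_covF, edgeCover, Set.mem_setOf_eq, mem_biUnion, mem_filter, mem_univ,
      true_and]
  rw [this, card_biUnion]
  · rw [Finset.sum_congr rfl (fun e he => ?_), Finset.sum_const, smul_eq_mul, mul_comm]
    obtain ⟨a, b⟩ := e
    have hab : a ≠ b := by simpa using hM.1 _ he
    have : univ.filter (· ∈ (s(a,b) : Sym2 V)) = {a, b} := by
      ext x; simp [Sym2.mem_iff]
    rw [this, card_insert_of_notMem (by simpa using hab), card_singleton]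
  · intro e he f hf hef
    simp only [disjoint_left, mem_filter, mem_univ, true_and]
    exact fun x hx => hM.2 e he f hf hef x hx

lemma exists_maximum (G : SimpleGraph V) :
    ∃ M : Finset (Sym2 V), IsMaximumMatchingSet G M := by
  classical
  obtain ⟨M, hM, hmax⟩ := Finset.exists_max_image
    ((univ : Finset (Finset (Sym2 V))).filter (IsMatchingSet G ·)) Finset.card
    ⟨∅, mem_filter.2 ⟨mem_univ _, by simp [IsMatchingSet]⟩⟩
  refine ⟨M, (mem_filter.1 hM).2, fun N hN => hmax N (by simp [hN])⟩

/-- two adjacent vertices missed by a maximum matching: contradiction -/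
lemma augment {G : SimpleGraph V} {M : Finset (Sym2 V)}
    (hM : IsMaximumMatchingSet G M) {u v : V} (hadj : G.Adj u v)
    (hu : u ∉ edgeCover M) (hv : v ∉ edgeCover M) : False := by
  classical
  have hnm : (s(u,v) : Sym2 V) ∉ M := fun h => hu ⟨_, h, Sym2.mem_mk_left _ _⟩
  have hins : IsMatchingSet G (insert s(u,v) M) := by
    constructor
    · intro e he
      rcases mem_insert.1 he with rfl | he
      · exact hadj
      · exact hM.1.1 e he
    · intro e he f hf hef x hx hxf
      have key : ∀ g ∈ M, x ∈ g → x ∉ (s(u,v) : Sym2 V) := by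
        intro g hg hxg hxuv
        rcases Sym2.mem_iff.1 hxuv with h | h
        · exact hu ⟨g, hg, h ▸ hxg⟩
        · exact hv ⟨g, hg, h ▸ hxg⟩
      rcases mem_insert.1 he with rfl | he
      · rcases mem_insert.1 hf with rfl | hf
        · exact hef rfl
        · exact key f hf hxf hx
      · rcases mem_insert.1 hf with rfl | hf
        · exact key e he hx hxf
        · exact hM.1.2 e he f hf hef x hx hxf
  have := hM.2 _ hins
  rw [card_insert_of_notMem hnm] at this
  omega

/-! ## Alternating walks -/

noncomputable def wk (P Q : Finset (Sym2 V)) (s : V) : ℕ → V := fun n =>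
  Nat.rec s (fun i v => if Even i then pt Q v else pt P v) n

def Tm (P Q : Finset (Sym2 V)) (i : ℕ) : Finset (Sym2 V) := if Even i then Q else P

variable {P Q : Finset (Sym2 V)} {s : V}

lemma wk_zero : wk P Q s 0 = s := rfl

lemma wk_succ (i : ℕ) :
    wk P Q s (i+1) = if Even i then pt Q (wk P Q s i) else pt P (wk P Q s i) := rfl

lemma Tm_nice (hP : NiceSet P) (hQ : NiceSet Q) (i : ℕ) : NiceSet (Tm P Q i) := by
  unfold Tm; split <;> assumption

lemma wk_edge {i : ℕ} (hok : wk P Q s i ∈ edgeCover (Tm P Q i)) :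
    s(wk P Q s i, wk P Q s (i+1)) ∈ Tm P Q i := by
  rw [wk_succ]
  unfold Tm at *
  by_cases hi : Even i <;> simp only [hi, if_true, if_false] at * <;>
    exact pt_mem (mem_edgeCover.1 hok)

lemma wk_inj (hP : NiceSet P) (hQ : NiceSet Q) (hsP : s ∉ edgeCover P)
    {n : ℕ} (hok : ∀ i < n, wk P Q s i ∈ edgeCover (Tm P Q i)) :
    ∀ i ≤ n, ∀ j < i, wk P Q s j ≠ wk P Q s i := by
  intro i
  induction i using Nat.strong_induction_on with
  | _ i IH =>
    intro hin j hji heq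
    obtain ⟨k, rfl⟩ : ∃ k, i = k + 1 := ⟨i - 1, by omega⟩
    have hkn : k < n := by omega
    have hE : s(wk P Q s k, wk P Q s (k+1)) ∈ Tm P Q k := wk_edge (hok k hkn)
    have hTm : NiceSet (Tm P Q k) := Tm_nice hP hQ k
    have hnd : wk P Q s k ≠ wk P Q s (k+1) := by
      intro h
      exact hTm.1 _ hE (by rw [Sym2.mk_isDiag_iff]; exact h)
    have hjk : j < k := by
      rcases Nat.lt_succ_iff_lt_or_eq.1 hji with h | rfl
      · exact h
      · exact absurd heq hnd
    -- the edge, seen from `wk j`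
    have hE' : s(wk P Q s j, wk P Q s k) ∈ Tm P Q k := by
      rw [Sym2.eq_swap]; rw [heq]; exact hE
    by_cases hk : Even k
    · -- Tm k = Q
      have hEQ : s(wk P Q s j, wk P Q s k) ∈ Q := by
        unfold Tm at hE'; rwa [if_pos hk] at hE'
      by_cases hj : Even j
      · have hEj : s(wk P Q s j, wk P Q s (j+1)) ∈ Q := by
          have := wk_edge (hok j (by omega))
          unfold Tm at this; rwa [if_pos hj] at this
        have h1 : wk P Q s (j+1) = wk P Q s k := partner_unique hQ hEj hEQ
        rcases Nat.lt_or_ge (j+1) k with h | h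
        · exact IH k (by omega) (by omega) (j+1) h h1
        · have hk1 : Even (j+1) := by rwa [(by omega : j + 1 = k)]
          exact (Nat.even_add_one.1 hk1) hj
      · have hj1 : (j - 1) + 1 = j := by
          have : j ≠ 0 := fun h => hj (h ▸ Even.zero)
          omega
        have hEj : s(wk P Q s (j-1), wk P Q s j) ∈ Q := by
          have h2 := wk_edge (hok (j-1) (by omega))
          have : Even (j - 1) := by
            rcases Nat.even_or_odd (j-1) with h | h
            · exact h
            · exact absurd (by obtain ⟨m, hm⟩ := h; exact ⟨m+1, by omega⟩ : Even j) hj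
          unfold Tm at h2; rw [if_pos this] at h2; rwa [hj1] at h2
        have hEj' : s(wk P Q s j, wk P Q s (j-1)) ∈ Q := by rwa [Sym2.eq_swap]
        have h1 : wk P Q s (j-1) = wk P Q s k := partner_unique hQ hEj' hEQ
        exact IH k (by omega) (by omega) (j-1) (by omega) h1
    · -- Tm k = P
      have hEP : s(wk P Q s j, wk P Q s k) ∈ P := by
        unfold Tm at hE'; rwa [if_neg hk] at hE'
      by_cases hj : Even j
      · rcases Nat.eq_zero_or_pos j with rfl | hj0
        · exact hsP ⟨_, hEP, Sym2.mem_mk_left _ _⟩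
        · have hj1 : (j - 1) + 1 = j := by omega
          have hEj : s(wk P Q s (j-1), wk P Q s j) ∈ P := by
            have h2 := wk_edge (hok (j-1) (by omega))
            have : ¬ Even (j - 1) := by
              intro h; rcases hj with ⟨m, hm⟩; rcases h with ⟨l, hl⟩; omega
            unfold Tm at h2; rw [if_neg this] at h2; rwa [hj1] at h2
          have hEj' : s(wk P Q s j, wk P Q s (j-1)) ∈ P := by rwa [Sym2.eq_swap]
          have h1 : wk P Q s (j-1) = wk P Q s k := partner_unique hP hEj' hEP
          exact IH k (by omega) (by omega) (j-1) (by omega) h1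
      · have hEj : s(wk P Q s j, wk P Q s (j+1)) ∈ P := by
          have := wk_edge (hok j (by omega))
          unfold Tm at this; rwa [if_neg hj] at this
        have h1 : wk P Q s (j+1) = wk P Q s k := partner_unique hP hEj hEP
        rcases Nat.lt_or_ge (j+1) k with h | h
        · exact IH k (by omega) (by omega) (j+1) h h1
        · have hjk1 : j + 1 = k := by omega
          apply hk
          rw [← hjk1, Nat.even_add_one]
          exact hj

lemma walk_exists (hP : NiceSet P) (hQ : NiceSet Q)
    (hsQ : s ∈ edgeCover Q) (hsP : s ∉ edgeCover P) :
    ∃ n, 0 < n ∧ (∀ i < n, wk P Q s i ∈ edgeCover (Tm P Q i)) ∧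
      wk P Q s n ∉ edgeCover (Tm P Q n) := by
  classical
  have hex : ∃ n, wk P Q s n ∉ edgeCover (Tm P Q n) := by
    by_contra hall
    push_neg at hall
    have hinj := wk_inj hP hQ hsP (n := Fintype.card V)
      (fun i _ => hall i)
    have : Function.Injective (fun i : Fin (Fintype.card V + 1) => wk P Q s i) := by
      intro a b hab
      by_contra hne
      rcases Nat.lt_or_ge (a : ℕ) (b : ℕ) with h | h
      · exact hinj b (Nat.lt_succ_iff.1 b.2) a h hab
      · have h' : (b : ℕ) < (a : ℕ) := by
          rcases Nat.lt_or_ge (b : ℕ) (a : ℕ) with h' | h'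
          · exact h'
          · exact absurd (Fin.ext (by omega)) hne
        exact hinj a (Nat.lt_succ_iff.1 a.2) b h' hab.symm
    have := Fintype.card_le_of_injective _ this
    simp at this
  refine ⟨Nat.find hex, ?_, ?_, Nat.find_spec hex⟩
  · rcases Nat.eq_zero_or_pos (Nat.find hex) with h | h
    · exfalso
      have := Nat.find_spec hex
      rw [h] at this
      exact this (by rwa [wk_zero, Tm, if_pos Even.zero])
    · exact h
  · intro i hi
    by_contra hcon
    exact absurd hcon (by simpa using Nat.find_min hex hi)

/-! ## Walk data and flips -/

structure WalkData (P Q : Finset (Sym2 V)) (s : V) (n : ℕ) : Prop where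
  hP : NiceSet P
  hQ : NiceSet Q
  hsQ : s ∈ edgeCover Q
  hsP : s ∉ edgeCover P
  hn : 0 < n
  hok : ∀ i < n, wk P Q s i ∈ edgeCover (Tm P Q i)
  hstop : wk P Q s n ∉ edgeCover (Tm P Q n)

lemma walkData_exists (hP : NiceSet P) (hQ : NiceSet Q)
    (hsQ : s ∈ edgeCover Q) (hsP : s ∉ edgeCover P) :
    ∃ n, WalkData P Q s n := by
  obtain ⟨n, h1, h2, h3⟩ := walk_exists hP hQ hsQ hsP
  exact ⟨n, hP, hQ, hsQ, hsP, h1, h2, h3⟩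

namespace WalkData

variable {n : ℕ} (W : WalkData P Q s n)

include W

lemma inj2 : ∀ i ≤ n, ∀ j ≤ n, wk P Q s i = wk P Q s j → i = j := by
  intro i hi j hj hij
  rcases Nat.lt_trichotomy i j with h | h | h
  · exact absurd hij (wk_inj W.hP W.hQ W.hsP W.hok j hj i h)
  · exact h
  · exact absurd hij.symm (wk_inj W.hP W.hQ W.hsP W.hok i hi j h)

lemma edge {i : ℕ} (hi : i < n) : s(wk P Q s i, wk P Q s (i+1)) ∈ Tm P Q i :=
  wk_edge (W.hok i hi)

lemma edgeQ {i : ℕ} (hi : i < n) (he : Even i) :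
    s(wk P Q s i, wk P Q s (i+1)) ∈ Q := by
  have := W.edge hi; unfold Tm at this; rwa [if_pos he] at this

lemma edgeP {i : ℕ} (hi : i < n) (he : ¬ Even i) :
    s(wk P Q s i, wk P Q s (i+1)) ∈ P := by
  have := W.edge hi; unfold Tm at this; rwa [if_neg he] at this

lemma edge_inj {i j : ℕ} (hi : i < n) (hj : j < n)
    (h : s(wk P Q s i, wk P Q s (i+1)) = s(wk P Q s j, wk P Q s (j+1))) : i = j := by
  rcases Sym2.eq_iff.1 h with ⟨h1, -⟩ | ⟨h1, h2⟩
  · exact W.inj2 i (by omega) j (by omega) h1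
  · have e1 : i = j + 1 := W.inj2 i (by omega) (j+1) (by omega) h1
    have e2 : i + 1 = j := W.inj2 (i+1) (by omega) j (by omega) h2
    omega

lemma stopP (hn : ¬ Even n) : wk P Q s n ∉ edgeCover P := by
  have := W.hstop; unfold Tm at this; rwa [if_neg hn] at this

lemma stopQ (hn : Even n) : wk P Q s n ∉ edgeCover Q := by
  have := W.hstop; unfold Tm at this; rwa [if_pos hn] at this

/-- every `P`-edge through a walk vertex is an odd walk edge -/
lemma pathP {j : ℕ} (hj : j ≤ n) {e : Sym2 V} (he : e ∈ P) (hv : wk P Q s j ∈ e) :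
    ∃ i, i < n ∧ ¬ Even i ∧ e = s(wk P Q s i, wk P Q s (i+1)) := by
  obtain ⟨y, rfl⟩ := Sym2.mem_iff_exists.1 hv
  by_cases hjE : Even j
  · rcases Nat.eq_zero_or_pos j with rfl | hj0
    · exact absurd ⟨_, he, Sym2.mem_mk_left _ _⟩ W.hsP
    · have hj1 : (j - 1) + 1 = j := by omega
      have hoddj1 : ¬ Even (j - 1) := by
        have h2 : Even ((j-1)+1) := by rwa [hj1]
        exact Nat.even_add_one.1 h2
      have hEj : s(wk P Q s (j-1), wk P Q s j) ∈ P := by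
        have := W.edgeP (i := j - 1) (by omega) hoddj1
        rwa [hj1] at this
      have : y = wk P Q s (j-1) :=
        partner_unique W.hP he (by rwa [Sym2.eq_swap])
      exact ⟨j - 1, by omega, hoddj1, by rw [this, hj1, Sym2.eq_swap]⟩
  · rcases Nat.lt_or_ge j n with hjn | hjn
    · have hEj := W.edgeP hjn hjE
      have : y = wk P Q s (j+1) := partner_unique W.hP he hEj
      exact ⟨j, hjn, hjE, by rw [this]⟩
    · have : j = n := by omega
      subst this
      exact absurd ⟨_, he, Sym2.mem_mk_left _ _⟩ (W.stopP hjE)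

/-- every `Q`-edge through a walk vertex is an even walk edge -/
lemma pathQ {j : ℕ} (hj : j ≤ n) {e : Sym2 V} (he : e ∈ Q) (hv : wk P Q s j ∈ e) :
    ∃ i, i < n ∧ Even i ∧ e = s(wk P Q s i, wk P Q s (i+1)) := by
  obtain ⟨y, rfl⟩ := Sym2.mem_iff_exists.1 hv
  by_cases hjE : Even j
  · rcases Nat.lt_or_ge j n with hjn | hjn
    · have hEj := W.edgeQ hjn hjE
      have : y = wk P Q s (j+1) := partner_unique W.hQ he hEj
      exact ⟨j, hjn, hjE, by rw [this]⟩
    · have : j = n := by omega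
      subst this
      exact absurd ⟨_, he, Sym2.mem_mk_left _ _⟩ (W.stopQ hjE)
  · have hj0 : 0 < j := by
      rcases Nat.eq_zero_or_pos j with rfl | h
      · exact absurd Even.zero hjE
      · exact h
    have hj1 : (j - 1) + 1 = j := by omega
    have hevj1 : Even (j - 1) := by
      rcases Nat.even_or_odd (j - 1) with h | h
      · exact h
      · exact absurd (by obtain ⟨m, hm⟩ := h; exact ⟨m+1, by omega⟩ : Even j) hjE
    have hEj : s(wk P Q s (j-1), wk P Q s j) ∈ Q := by
      have := W.edgeQ (i := j - 1) (by omega) hevj1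
      rwa [hj1] at this
    have : y = wk P Q s (j-1) :=
      partner_unique W.hQ he (by rwa [Sym2.eq_swap])
    exact ⟨j - 1, by omega, hevj1, by rw [this, hj1, Sym2.eq_swap]⟩

end WalkData

lemma card_range_even (n : ℕ) :
    ((range n).filter (fun i => Even i)).card = (n+1)/2 := by
  induction n with
  | zero => simp
  | succ n ih =>
    rw [range_add_one, filter_insert]
    by_cases h : Even n
    · rw [if_pos h, card_insert_of_notMem (by simp)]
      obtain ⟨m, rfl⟩ := h
      omega
    · rw [if_neg h]
      have : ¬ Odd (n+1) := by simpa [Nat.odd_add_one] using h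
      rcases Nat.even_or_odd n with h' | h'
      · exact absurd h' h
      · obtain ⟨m, rfl⟩ := h'
        omega

lemma card_range_odd (n : ℕ) :
    ((range n).filter (fun i => ¬ Even i)).card = n/2 := by
  have h1 := card_range_even n
  have h2 : ((range n).filter (fun i => Even i)).card
      + ((range n).filter (fun i => ¬ Even i)).card = n := by
    rw [Finset.card_filter_add_card_filter_not, card_range]
  omega

noncomputable def Po (P Q : Finset (Sym2 V)) (s : V) (n : ℕ) : Finset (Sym2 V) :=
  ((range n).filter fun i => ¬ Even i).image fun i => s(wk P Q s i, wk P Q s (i+1))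

noncomputable def Qe (P Q : Finset (Sym2 V)) (s : V) (n : ℕ) : Finset (Sym2 V) :=
  ((range n).filter fun i => Even i).image fun i => s(wk P Q s i, wk P Q s (i+1))

lemma mem_Po {n : ℕ} {e : Sym2 V} :
    e ∈ Po P Q s n ↔ ∃ i, i < n ∧ ¬ Even i ∧ e = s(wk P Q s i, wk P Q s (i+1)) := by
  simp only [Po, mem_image, mem_filter, mem_range]
  constructor
  · rintro ⟨i, ⟨h1, h2⟩, h3⟩; exact ⟨i, h1, h2, h3.symm⟩
  · rintro ⟨i, h1, h2, h3⟩; exact ⟨i, ⟨h1, h2⟩, h3.symm⟩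

lemma mem_Qe {n : ℕ} {e : Sym2 V} :
    e ∈ Qe P Q s n ↔ ∃ i, i < n ∧ Even i ∧ e = s(wk P Q s i, wk P Q s (i+1)) := by
  simp only [Qe, mem_image, mem_filter, mem_range]
  constructor
  · rintro ⟨i, ⟨h1, h2⟩, h3⟩; exact ⟨i, h1, h2, h3.symm⟩
  · rintro ⟨i, h1, h2, h3⟩; exact ⟨i, ⟨h1, h2⟩, h3.symm⟩

namespace WalkData

variable {n : ℕ} {G : SimpleGraph V} (W : WalkData P Q s n)

include W

lemma Po_subset : Po P Q s n ⊆ P := by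
  intro e he
  obtain ⟨i, h1, h2, rfl⟩ := mem_Po.1 he
  exact W.edgeP h1 h2

lemma Qe_subset : Qe P Q s n ⊆ Q := by
  intro e he
  obtain ⟨i, h1, h2, rfl⟩ := mem_Qe.1 he
  exact W.edgeQ h1 h2

lemma Po_card : (Po P Q s n).card = n / 2 := by
  rw [Po, card_image_of_injOn, card_range_odd]
  intro i hi j hj h
  simp only [mem_coe, mem_filter, mem_range] at hi hj
  exact W.edge_inj hi.1 hj.1 h

lemma Qe_card : (Qe P Q s n).card = (n+1) / 2 := by
  rw [Qe, card_image_of_injOn, card_range_even]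
  intro i hi j hj h
  simp only [mem_coe, mem_filter, mem_range] at hi hj
  exact W.edge_inj hi.1 hj.1 h

lemma Qe_not_P : ∀ e ∈ Qe P Q s n, e ∉ P := by
  intro e he heP
  obtain ⟨i, h1, h2, rfl⟩ := mem_Qe.1 he
  obtain ⟨j, hj1, hj2, hje⟩ := W.pathP (by omega : i ≤ n) heP (Sym2.mem_mk_left _ _)
  exact hj2 (W.edge_inj hj1 h1 hje.symm ▸ h2)

lemma Po_not_Q : ∀ e ∈ Po P Q s n, e ∉ Q := by
  intro e he heQ
  obtain ⟨i, h1, h2, rfl⟩ := mem_Po.1 he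
  obtain ⟨j, hj1, hj2, hje⟩ := W.pathQ (by omega : i ≤ n) heQ (Sym2.mem_mk_left _ _)
  exact h2 (W.edge_inj h1 hj1 hje ▸ hj2)

lemma interiorP {i : ℕ} (h0 : 0 < i) (hi : i < n) : wk P Q s i ∈ edgeCover P := by
  by_cases h : Even i
  · have h1 : (i - 1) + 1 = i := by omega
    have hodd : ¬ Even (i - 1) := fun hc => (Nat.even_add_one.1 (h1 ▸ (by rwa [h1] : Even ((i-1)+1)))) hc
    have := W.edgeP (i := i - 1) (by omega) hodd
    rw [h1] at this
    exact ⟨_, this, Sym2.mem_mk_right _ _⟩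
  · exact ⟨_, W.edgeP hi h, Sym2.mem_mk_left _ _⟩

lemma interiorQ {i : ℕ} (hi : i < n) : wk P Q s i ∈ edgeCover Q := by
  by_cases h : Even i
  · exact ⟨_, W.edgeQ hi h, Sym2.mem_mk_left _ _⟩
  · have h0 : 0 < i := by
      rcases Nat.eq_zero_or_pos i with rfl | h' ; · exact absurd Even.zero h
      exact h'
    have h1 : (i - 1) + 1 = i := by omega
    have hev : Even (i - 1) := by
      rcases Nat.even_or_odd (i-1) with h' | h'
      · exact h'
      · exact absurd (by obtain ⟨m, hm⟩ := h'; exact ⟨m+1, by omega⟩ : Even i) h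
    have := W.edgeQ (i := i - 1) (by omega) hev
    rw [h1] at this
    exact ⟨_, this, Sym2.mem_mk_right _ _⟩

lemma flipP_matching (hPG : IsMatchingSet G P) (hQG : ∀ e ∈ Q, e ∈ G.edgeSet) :
    IsMatchingSet G ((P \ Po P Q s n) ∪ Qe P Q s n) := by
  constructor
  · intro e he
    rcases mem_union.1 he with he | he
    · exact hPG.1 e (mem_sdiff.1 he).1
    · exact hQG e (W.Qe_subset he)
  · intro e he f hf hef x hx hxf
    have key : ∀ g, g ∈ P → g ∉ Po P Q s n → ∀ i ≤ n, wk P Q s i ∉ g := by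
      intro g hg hgo i hi hxg
      obtain ⟨j, hj1, hj2, hje⟩ := W.pathP hi hg hxg
      exact hgo (mem_Po.2 ⟨j, hj1, hj2, hje⟩)
    rcases mem_union.1 he with he | he <;> rcases mem_union.1 hf with hf | hf
    · exact hPG.2 e (mem_sdiff.1 he).1 f (mem_sdiff.1 hf).1 hef x hx hxf
    · obtain ⟨i, h1, h2, rfl⟩ := mem_Qe.1 hf
      rcases Sym2.mem_iff.1 hxf with rfl | rfl
      · exact key e (mem_sdiff.1 he).1 (mem_sdiff.1 he).2 i (by omega) hx
      · exact key e (mem_sdiff.1 he).1 (mem_sdiff.1 he).2 (i+1) (by omega) hx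
    · obtain ⟨i, h1, h2, rfl⟩ := mem_Qe.1 he
      rcases Sym2.mem_iff.1 hx with rfl | rfl
      · exact key f (mem_sdiff.1 hf).1 (mem_sdiff.1 hf).2 i (by omega) hxf
      · exact key f (mem_sdiff.1 hf).1 (mem_sdiff.1 hf).2 (i+1) (by omega) hxf
    · exact W.hQ.2 e (W.Qe_subset he) f (W.Qe_subset hf) hef x hx hxf

lemma flip_disj : Disjoint (P \ Po P Q s n) (Qe P Q s n) := by
  rw [disjoint_right]
  intro e he hf
  exact W.Qe_not_P e he (mem_sdiff.1 hf).1

lemma flipP_card : ((P \ Po P Q s n) ∪ Qe P Q s n).card + n / 2 = P.card + (n+1) / 2 := by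
  rw [card_union_of_disjoint (W.flip_disj), card_sdiff_of_subset (W.Po_subset), W.Po_card, W.Qe_card]
  have : (Po P Q s n).card ≤ P.card := card_le_card (W.Po_subset)
  rw [W.Po_card] at this
  omega

lemma flipP_cover_sub {v : V} (hv : v ∈ edgeCover ((P \ Po P Q s n) ∪ Qe P Q s n)) :
    v ∈ edgeCover P ∨ ∃ i, i ≤ n ∧ v = wk P Q s i := by
  obtain ⟨e, he, hve⟩ := hv
  rcases mem_union.1 he with he | he
  · exact Or.inl ⟨e, (mem_sdiff.1 he).1, hve⟩
  · obtain ⟨i, h1, h2, rfl⟩ := mem_Qe.1 he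
    rcases Sym2.mem_iff.1 hve with rfl | rfl
    · exact Or.inr ⟨i, by omega, rfl⟩
    · exact Or.inr ⟨i+1, by omega, rfl⟩

lemma flipP_cover_keep {v : V} (hv : v ∈ edgeCover P) (hvn : v ≠ wk P Q s n) :
    v ∈ edgeCover ((P \ Po P Q s n) ∪ Qe P Q s n) := by
  obtain ⟨e, he, hve⟩ := hv
  by_cases hpo : e ∈ Po P Q s n
  · obtain ⟨i, h1, h2, rfl⟩ := mem_Po.1 hpo
    rcases Sym2.mem_iff.1 hve with rfl | rfl
    · -- v = wk i, i odd hence positive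
      have h0 : 0 < i := by
        rcases Nat.eq_zero_or_pos i with rfl | h' ; · exact absurd Even.zero h2
        exact h'
      have h1' : (i - 1) + 1 = i := by omega
      have hev : Even (i - 1) := by
        rcases Nat.even_or_odd (i-1) with h' | h'
        · exact h'
        · exact absurd (by obtain ⟨m, hm⟩ := h'; exact ⟨m+1, by omega⟩ : Even i) h2
      refine ⟨s(wk P Q s (i-1), wk P Q s i), mem_union_right _ ?_, Sym2.mem_mk_right _ _⟩
      refine mem_Qe.2 ⟨i - 1, by omega, hev, by rw [h1']⟩
    · -- v = wk (i+1)
      rcases Nat.lt_or_ge (i+1) n with h | h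
      · refine ⟨s(wk P Q s (i+1), wk P Q s (i+2)), mem_union_right _ ?_, Sym2.mem_mk_left _ _⟩
        exact mem_Qe.2 ⟨i+1, h, Nat.even_add_one.2 h2, rfl⟩
      · have hin : i + 1 = n := by omega
        exact absurd (by rw [hin]) hvn
  · exact ⟨e, mem_union_left _ (mem_sdiff.2 ⟨he, hpo⟩), hve⟩

lemma flipP_start : wk P Q s 0 ∈ edgeCover ((P \ Po P Q s n) ∪ Qe P Q s n) :=
  ⟨s(wk P Q s 0, wk P Q s 1), mem_union_right _
    (mem_Qe.2 ⟨0, W.hn, Even.zero, rfl⟩), Sym2.mem_mk_left _ _⟩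

lemma flipP_end (hev : Even n) :
    wk P Q s n ∉ edgeCover ((P \ Po P Q s n) ∪ Qe P Q s n) := by
  rintro ⟨e, he, hve⟩
  rcases mem_union.1 he with he | he
  · obtain ⟨j, hj1, hj2, hje⟩ := W.pathP le_rfl (mem_sdiff.1 he).1 hve
    exact (mem_sdiff.1 he).2 (mem_Po.2 ⟨j, hj1, hj2, hje⟩)
  · obtain ⟨i, h1, h2, rfl⟩ := mem_Qe.1 he
    rcases Sym2.mem_iff.1 hve with h | h
    · exact absurd (W.inj2 n le_rfl i (by omega) h) (by omega)
    · have : n = i + 1 := W.inj2 n le_rfl (i+1) (by omega) h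
      exact (Nat.even_add_one.1 (this ▸ hev)) h2

lemma flipQ_matching (hQG : IsMatchingSet G Q) (hPG : ∀ e ∈ P, e ∈ G.edgeSet) :
    IsMatchingSet G ((Q \ Qe P Q s n) ∪ Po P Q s n) := by
  constructor
  · intro e he
    rcases mem_union.1 he with he | he
    · exact hQG.1 e (mem_sdiff.1 he).1
    · exact hPG e (W.Po_subset he)
  · intro e he f hf hef x hx hxf
    have key : ∀ g, g ∈ Q → g ∉ Qe P Q s n → ∀ i ≤ n, wk P Q s i ∉ g := by
      intro g hg hgo i hi hxg
      obtain ⟨j, hj1, hj2, hje⟩ := W.pathQ hi hg hxg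
      exact hgo (mem_Qe.2 ⟨j, hj1, hj2, hje⟩)
    rcases mem_union.1 he with he | he <;> rcases mem_union.1 hf with hf | hf
    · exact hQG.2 e (mem_sdiff.1 he).1 f (mem_sdiff.1 hf).1 hef x hx hxf
    · obtain ⟨i, h1, h2, rfl⟩ := mem_Po.1 hf
      rcases Sym2.mem_iff.1 hxf with rfl | rfl
      · exact key e (mem_sdiff.1 he).1 (mem_sdiff.1 he).2 i (by omega) hx
      · exact key e (mem_sdiff.1 he).1 (mem_sdiff.1 he).2 (i+1) (by omega) hx
    · obtain ⟨i, h1, h2, rfl⟩ := mem_Po.1 he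
      rcases Sym2.mem_iff.1 hx with rfl | rfl
      · exact key f (mem_sdiff.1 hf).1 (mem_sdiff.1 hf).2 i (by omega) hxf
      · exact key f (mem_sdiff.1 hf).1 (mem_sdiff.1 hf).2 (i+1) (by omega) hxf
    · exact W.hP.2 e (W.Po_subset he) f (W.Po_subset hf) hef x hx hxf

lemma flipQ_disj : Disjoint (Q \ Qe P Q s n) (Po P Q s n) := by
  rw [disjoint_right]
  intro e he hf
  exact W.Po_not_Q e he (mem_sdiff.1 hf).1

lemma flipQ_card (hev : Even n) : ((Q \ Qe P Q s n) ∪ Po P Q s n).card = Q.card := by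
  rw [card_union_of_disjoint (W.flipQ_disj), card_sdiff_of_subset (W.Qe_subset), W.Po_card, W.Qe_card]
  have : (Qe P Q s n).card ≤ Q.card := card_le_card (W.Qe_subset)
  rw [W.Qe_card] at this
  obtain ⟨m, rfl⟩ := hev
  omega

lemma flipQ_cover_sub {v : V} (hv : v ∈ edgeCover ((Q \ Qe P Q s n) ∪ Po P Q s n)) :
    v ∈ edgeCover Q ∨ ∃ i, i ≤ n ∧ v = wk P Q s i := by
  obtain ⟨e, he, hve⟩ := hv
  rcases mem_union.1 he with he | he
  · exact Or.inl ⟨e, (mem_sdiff.1 he).1, hve⟩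
  · obtain ⟨i, h1, h2, rfl⟩ := mem_Po.1 he
    rcases Sym2.mem_iff.1 hve with rfl | rfl
    · exact Or.inr ⟨i, by omega, rfl⟩
    · exact Or.inr ⟨i+1, by omega, rfl⟩

lemma flipQ_inter : (P ∩ Q) ∪ Po P Q s n ⊆ P ∩ ((Q \ Qe P Q s n) ∪ Po P Q s n) := by
  intro e he
  rcases mem_union.1 he with he | he
  · have h1 := (mem_inter.1 he).1
    have h2 := (mem_inter.1 he).2
    refine mem_inter.2 ⟨h1, mem_union_left _ (mem_sdiff.2 ⟨h2, fun hc => ?_⟩)⟩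
    exact W.Qe_not_P e hc h1
  · exact mem_inter.2 ⟨W.Po_subset he, mem_union_right _ he⟩

lemma Po_nonempty (h2 : 2 ≤ n) : (Po P Q s n).Nonempty :=
  ⟨s(wk P Q s 1, wk P Q s 2), mem_Po.2 ⟨1, by omega, by simp, rfl⟩⟩

lemma Po_disjoint_inter : Disjoint (P ∩ Q) (Po P Q s n) := by
  rw [disjoint_right]
  intro e he hf
  exact W.Po_not_Q e he (mem_inter.1 hf).2

end WalkData

variable {G : SimpleGraph V}

lemma Gstar_edge_sub : (Gstar G).edgeSet ⊆ G.edgeSet := by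
  intro e
  induction e with
  | _ a b => exact fun h => h.1

lemma mem_Dset_of_missed {M : Finset (Sym2 V)} (hM : IsMaximumMatchingSet G M)
    {v : V} (h : v ∉ edgeCover M) : v ∈ Dset G := ⟨M, hM, h⟩

lemma covered_of_not_Dset {v : V} (h : v ∉ Dset G) {M : Finset (Sym2 V)}
    (hM : IsMaximumMatchingSet G M) : v ∈ edgeCover M := by
  by_contra hc
  exact h ⟨M, hM, hc⟩

/-- Main lemma 1: there is a maximum matching covering all of `D*`. -/
lemma exists_max_cover_Dstar (N₁ : Finset (Sym2 V)) (hN₁ : IsMatchingSet (Gstar G) N₁)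
    (hN₁cov : ∀ v ∈ DstarSet G, v ∈ edgeCover N₁) :
    ∃ M, IsMaximumMatchingSet G M ∧ ∀ d ∈ DstarSet G, d ∈ edgeCover M := by
  classical
  obtain ⟨M₀, hM₀⟩ := exists_maximum G
  obtain ⟨M, hMmem, hMmax⟩ := Finset.exists_max_image
    ((univ : Finset (Finset (Sym2 V))).filter (fun M => IsMaximumMatchingSet G M))
    (fun M => (univ.filter (fun v => v ∈ DstarSet G ∧ v ∈ edgeCover M)).card)
    ⟨M₀, by simp [hM₀]⟩
  have hM : IsMaximumMatchingSet G M := (mem_filter.1 hMmem).2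
  refine ⟨M, hM, ?_⟩
  intro d hd
  by_contra hdM
  have hQnice : NiceSet N₁ := hN₁.nice
  have hPnice : NiceSet M := hM.1.nice
  obtain ⟨n, W⟩ := walkData_exists hPnice hQnice (hN₁cov d hd) hdM
  have hcard := W.flipP_card
  set M' := (M \ Po M N₁ d n) ∪ Qe M N₁ d n with hM'def
  have hM'match : IsMatchingSet G M' :=
    W.flipP_matching hM.1 (fun e he => Gstar_edge_sub (hN₁.1 e he))
  by_cases hev : Even n
  · have hcard' : M'.card = M.card := by
      obtain ⟨m, rfl⟩ := hev
      omega
    have hM'max : IsMaximumMatchingSet G M' :=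
      ⟨hM'match, fun N hN => (hM.2 N hN).trans_eq hcard'.symm⟩
    have hsub : univ.filter (fun v => v ∈ DstarSet G ∧ v ∈ edgeCover M)
        ⊂ univ.filter (fun v => v ∈ DstarSet G ∧ v ∈ edgeCover M') := by
      rw [ssubset_iff_of_subset]
      · refine ⟨d, ?_, ?_⟩
        · simp only [mem_filter, mem_univ, true_and]
          exact ⟨hd, by
            have := W.flipP_start
            rwa [wk_zero] at this⟩
        · simp only [mem_filter, mem_univ, true_and, not_and]
          exact fun _ => hdM
      · intro v hv
        simp only [mem_filter, mem_univ, true_and] at hv ⊢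
        refine ⟨hv.1, W.flipP_cover_keep hv.2 ?_⟩
        intro hc
        exact W.stopQ hev (hc ▸ hN₁cov v hv.1)
    have hlt := card_lt_card hsub
    have := hMmax M' (mem_filter.2 ⟨mem_univ _, hM'max⟩)
    omega
  · have hcard' : M'.card = M.card + 1 := by
      have hodd : Odd n := Nat.not_even_iff_odd.1 hev
      obtain ⟨m, rfl⟩ := hodd
      omega
    have := hM.2 M' hM'match
    omega

/-- Main lemma 2 (auxiliary, induction on distance): two distinct vertices missed
by the same maximum matching are not connected in `G[D(G)]`. -/
lemma missed_not_reachable_aux :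
    ∀ d : ℕ, ∀ W : Finset (Sym2 V), IsMaximumMatchingSet G W →
    ∀ u u' : V, u ≠ u' → u ∉ edgeCover W → u' ∉ edgeCover W →
    (indOn G (Dset G)).Reachable u u' → (indOn G (Dset G)).dist u u' ≤ d → False := by
  classical
  intro d
  induction d with
  | zero =>
    intro W hW u u' hne hu hu' hr hd
    have := hr.pos_dist_of_ne hne
    omega
  | succ d IH =>
    intro W hW u u' hne hu hu' hr hd
    rcases Nat.lt_or_ge ((indOn G (Dset G)).dist u u') (d+1) with hlt | hge
    · exact IH W hW u u' hne hu hu' hr (by omega)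
    · have hdist : (indOn G (Dset G)).dist u u' = d + 1 := by omega
      obtain ⟨p, hp⟩ := hr.exists_walk_length_eq_dist
      rw [hdist] at hp
      cases p with
      | nil => simp at hp
      | @cons _ w _ h q =>
        simp only [SimpleGraph.Walk.length_cons, Nat.add_right_cancel_iff] at hp
        have hGuw : G.Adj u w := h.2.2
        have hwD : w ∈ Dset G := h.2.1
        by_cases hwu' : w = u'
        · exact augment hW (hwu' ▸ hGuw) hu hu'
        by_cases hwW : w ∈ edgeCover W
        swap
        · exact IH W hW w u' hwu' hwW hu' q.reachable (hp ▸ SimpleGraph.dist_le q)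
        obtain ⟨K0, hK0, hK0w⟩ := hwD
        obtain ⟨N, hNmem, hNmax⟩ := Finset.exists_max_image
          ((univ : Finset (Finset (Sym2 V))).filter
            (fun K => IsMaximumMatchingSet G K ∧ w ∉ edgeCover K))
          (fun K => (W ∩ K).card)
          ⟨K0, by simp [hK0, hK0w]⟩
        obtain ⟨hN, hNw⟩ : IsMaximumMatchingSet G N ∧ w ∉ edgeCover N :=
          (mem_filter.1 hNmem).2
        have hu'N : u' ∈ edgeCover N := by
          by_contra hc
          exact IH N hN w u' hwu' hNw hc q.reachable (hp ▸ SimpleGraph.dist_le q)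
        obtain ⟨n, Wd⟩ := walkData_exists hW.1.nice hN.1.nice hu'N hu'
        have hWN : W.card = N.card := le_antisymm (hN.2 W hW.1) (hW.2 N hN.1)
        by_cases hev : Even n
        · by_cases hwn : wk W N u' n = w
          · -- flip `W` along the walk; get a maximum matching missing both `u` and `w`
            have hcard := Wd.flipP_card
            have hmatch : IsMatchingSet G ((W \ Po W N u' n) ∪ Qe W N u' n) :=
              Wd.flipP_matching hW.1 (fun e he => hN.1.1 e he)
            have hcard' : ((W \ Po W N u' n) ∪ Qe W N u' n).card = W.card := by
              obtain ⟨m, rfl⟩ := hev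
              omega
            have hmax : IsMaximumMatchingSet G ((W \ Po W N u' n) ∪ Qe W N u' n) :=
              ⟨hmatch, fun K hK => (hW.2 K hK).trans_eq hcard'.symm⟩
            have hwmiss : w ∉ edgeCover ((W \ Po W N u' n) ∪ Qe W N u' n) := by
              rw [← hwn]
              exact Wd.flipP_end hev
            have humiss : u ∉ edgeCover ((W \ Po W N u' n) ∪ Qe W N u' n) := by
              intro hc
              rcases Wd.flipP_cover_sub hc with hc | ⟨i, hi, hui⟩
              · exact hu hc
              · rcases Nat.eq_zero_or_pos i with rfl | hi0
                · rw [wk_zero] at hui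
                  exact hne hui
                rcases Nat.lt_or_ge i n with hin | hin
                · exact hu (hui ▸ Wd.interiorP hi0 hin)
                · have : i = n := by omega
                  subst this
                  rw [hwn] at hui
                  exact hu (hui ▸ hwW)
            exact augment hmax hGuw humiss hwmiss
          · -- flip `N` along the walk; get a better matching missing `w`
            have hmatch : IsMatchingSet G ((N \ Qe W N u' n) ∪ Po W N u' n) :=
              Wd.flipQ_matching hN.1 (fun e he => hW.1.1 e he)
            have hcard' := Wd.flipQ_card hev
            have hmax : IsMaximumMatchingSet G ((N \ Qe W N u' n) ∪ Po W N u' n) :=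
              ⟨hmatch, fun K hK => (hN.2 K hK).trans_eq hcard'.symm⟩
            have hwmiss : w ∉ edgeCover ((N \ Qe W N u' n) ∪ Po W N u' n) := by
              intro hc
              rcases Wd.flipQ_cover_sub hc with hc | ⟨i, hi, hwi⟩
              · exact hNw hc
              · rcases Nat.lt_or_ge i n with hin | hin
                · exact hNw (hwi ▸ Wd.interiorQ hin)
                · have : i = n := by omega
                  subst this
                  exact hwn hwi.symm
            have hmem : ((N \ Qe W N u' n) ∪ Po W N u' n) ∈
                (univ : Finset (Finset (Sym2 V))).filter
                  (fun K => IsMaximumMatchingSet G K ∧ w ∉ edgeCover K) :=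
              mem_filter.2 ⟨mem_univ _, hmax, hwmiss⟩
            have hle := hNmax _ hmem
            have hsub := card_le_card (Wd.flipQ_inter (P := W) (Q := N))
            rw [card_union_of_disjoint (Wd.Po_disjoint_inter)] at hsub
            have hne' : 0 < (Po W N u' n).card := by
              refine Nonempty.card_pos (Wd.Po_nonempty ?_)
              obtain ⟨m, rfl⟩ := hev
              have := Wd.hn
              omega
            have : (W ∩ ((N \ Qe W N u' n) ∪ Po W N u' n)).card ≤ (W ∩ N).card := hle
            omega
        · -- odd walk: `W` was not maximum, contradiction
          have hcard := Wd.flipP_card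
          have hmatch : IsMatchingSet G ((W \ Po W N u' n) ∪ Qe W N u' n) :=
            Wd.flipP_matching hW.1 (fun e he => hN.1.1 e he)
          have := hW.2 _ hmatch
          obtain ⟨m, rfl⟩ := Nat.not_even_iff_odd.1 hev
          omega

lemma missed_not_reachable {W : Finset (Sym2 V)} (hW : IsMaximumMatchingSet G W)
    {u u' : V} (hne : u ≠ u') (hu : u ∉ edgeCover W) (hu' : u' ∉ edgeCover W) :
    ¬ (indOn G (Dset G)).Reachable u u' := fun hr =>
  missed_not_reachable_aux ((indOn G (Dset G)).dist u u') W hW u u' hne hu hu' hr le_rfl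

lemma indOn_edgeSet_sub {s : Set V} : (indOn G s).edgeSet ⊆ G.edgeSet := by
  intro e
  induction e with
  | _ a b => exact fun h => h.2.2

lemma IsMatchingSet.of_indOn {s : Set V} {N : Finset (Sym2 V)}
    (h : IsMatchingSet (indOn G s) N) : IsMatchingSet G N :=
  ⟨fun e he => indOn_edgeSet_sub (h.1 e he), h.2⟩


/-- If `A(G) ≠ ∅`, `md(G*) = 1` and `N₁` is a matching of `G*` covering `D*`,
then there are a maximum matching `M` of `G` with `V(N₁) ⊆ V(M)` and a matching `N` of
`G[D(G)]` such that `M ∪ N` is an optimal matching cover of `G` (it covers `V(G)` and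
`mc(G) = 2`). -/
theorem optimal_cover_of_md_eq_one (G : SimpleGraph V) (hconn : G.Connected)
    (hA : (Aset G).Nonempty) (hmd : md (Gstar G) (DstarSet G) = 1)
    (N₁ : Finset (Sym2 V)) (hN₁ : IsMatchingSet (Gstar G) N₁)
    (hN₁cov : ∀ v ∈ DstarSet G, v ∈ edgeCover N₁) :
    ∃ M N : Finset (Sym2 V), IsMaximumMatchingSet G M ∧
      edgeCover N₁ ⊆ edgeCover M ∧
      IsMatchingSet (indOn G (Dset G)) N ∧
      (∀ v : V, v ∈ edgeCover (M ∪ N)) ∧ mc G = 2 := by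
  classical
  obtain ⟨M, hM, hMD⟩ := exists_max_cover_Dstar N₁ hN₁ hN₁cov
  have hmissD : ∀ v, v ∉ edgeCover M → ∃ x, (indOn G (Dset G)).Adj v x := by
    intro v hv
    have hvD : v ∈ Dset G := ⟨M, hM, hv⟩
    have hvDs : v ∉ DstarSet G := fun h => hv (hMD v h)
    have : ¬ (∀ u : V, ¬ (indOn G (Dset G)).Adj v u) := fun h => hvDs ⟨hvD, h⟩
    push_neg at this
    exact this
  set nbr : V → V := fun v =>
    if h : ∃ x, (indOn G (Dset G)).Adj v x then h.choose else v with hnbrdef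
  have hnbr : ∀ v, v ∉ edgeCover M → (indOn G (Dset G)).Adj v (nbr v) := by
    intro v hv
    have h := hmissD v hv
    simp only [hnbrdef, dif_pos h]
    exact h.choose_spec
  have hind : ∀ u v, u ∉ edgeCover M → v ∉ edgeCover M → ¬ G.Adj u v := by
    intro u v hu hv hadj
    exact augment hM hadj hu hv
  set N : Finset (Sym2 V) :=
    (univ.filter (fun v => v ∉ edgeCover M)).image (fun v => s(v, nbr v)) with hNdef
  have hNmem : ∀ e ∈ N, ∃ u, u ∉ edgeCover M ∧ e = s(u, nbr u) := by
    intro e he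
    rw [hNdef] at he
    obtain ⟨u, hu, hue⟩ := mem_image.1 he
    exact ⟨u, by simpa using hu, hue.symm⟩
  have hNmatch : IsMatchingSet (indOn G (Dset G)) N := by
    constructor
    · intro e he
      obtain ⟨u, hu, rfl⟩ := hNmem e he
      exact hnbr u hu
    · intro e he f hf hef x hx hxf
      obtain ⟨u, hu, rfl⟩ := hNmem e he
      obtain ⟨v, hv, rfl⟩ := hNmem f hf
      have huv : u ≠ v := fun h => hef (by rw [h])
      have h2 : u ≠ nbr v := by
        intro h
        apply hind v u hv hu
        have := (hnbr v hv).2.2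
        rwa [← h] at this
      have h3 : nbr u ≠ v := by
        intro h
        apply hind u v hu hv
        have := (hnbr u hu).2.2
        rwa [h] at this
      have h4 : nbr u ≠ nbr v := by
        intro h
        apply missed_not_reachable hM huv hu hv
        have r1 : (indOn G (Dset G)).Reachable u (nbr u) := (hnbr u hu).reachable
        have r2 : (indOn G (Dset G)).Reachable v (nbr v) := (hnbr v hv).reachable
        exact r1.trans (h ▸ r2.symm)
      rcases Sym2.mem_iff.1 hx with rfl | rfl <;>
        rcases Sym2.mem_iff.1 hxf with h | h
      · exact huv h
      · exact h2 h
      · exact h3 h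
      · exact h4 h
  have hN₁sub : edgeCover N₁ ⊆ edgeCover M := by
    intro v hv
    obtain ⟨w, hw⟩ := mem_edgeCover.1 hv
    have hadj : (Gstar G).Adj v w := hN₁.1 _ hw
    rcases hadj.2 with ⟨hvA, -⟩ | ⟨hvD, -⟩
    · exact covered_of_not_Dset hvA.1 hM
    · exact hMD v hvD
  have hcovall : ∀ v, v ∈ edgeCover (M ∪ N) := by
    intro v
    by_cases hv : v ∈ edgeCover M
    · obtain ⟨e, he, hve⟩ := hv
      exact ⟨e, mem_union_left _ he, hve⟩
    · refine ⟨s(v, nbr v), mem_union_right _ ?_, Sym2.mem_mk_left _ _⟩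
      rw [hNdef]
      exact mem_image_of_mem _ (by simpa using hv)
  have hNG : IsMatchingSet G N := hNmatch.of_indOn
  have hS2 : ∃ Mc : Finset (Sym2 V), IsKMatchingCover G 2 Mc := by
    refine ⟨M ∪ N, ⟨![M, N], ?_, ?_⟩, hcovall⟩
    · intro i
      fin_cases i
      · simpa using hM.1
      · simpa using hNG
    · ext e
      simp [Finset.mem_biUnion, Fin.exists_fin_two, mem_union]
  have hS0 : ¬ ∃ Mc : Finset (Sym2 V), IsKMatchingCover G 0 Mc := by
    rintro ⟨Mc, ⟨f, -, rfl⟩, hcov⟩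
    obtain ⟨a, -⟩ := hA
    obtain ⟨e, he, -⟩ := hcov a
    obtain ⟨i, -, -⟩ := mem_biUnion.1 he
    exact i.elim0
  have hS1 : ¬ ∃ Mc : Finset (Sym2 V), IsKMatchingCover G 1 Mc := by
    rintro ⟨Mc, ⟨f, hf, rfl⟩, hcov⟩
    have hbi : (univ : Finset (Fin 1)).biUnion f = f 0 := by
      ext e
      simp [Finset.mem_biUnion, Fin.exists_fin_one]
    obtain ⟨a, ha⟩ := hA
    obtain ⟨u, huD, -⟩ := ha.2
    obtain ⟨K, hK, hKu⟩ := huD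
    have hcovF : covF (f 0) = univ := by
      ext v
      simp only [mem_covF, mem_univ, iff_true]
      have := hcov v
      rwa [hbi] at this
    have hc1 : 2 * (f 0).card = Fintype.card V := by
      rw [← covF_card (hf 0).nice, hcovF, card_univ]
    have hc2 : (covF K).card = 2 * K.card := covF_card hK.1.nice
    have hc2' : (covF K).card ≤ Fintype.card V := by
      rw [← card_univ]
      exact card_le_card (subset_univ _)
    have hc3 : (f 0).card ≤ K.card := hK.2 _ (hf 0)
    have hKuniv : covF K = univ := by
      apply eq_univ_of_card
      rw [hc2] at hc2'
      rw [hc2]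
      omega
    exact hKu (mem_covF.1 (hKuniv ▸ mem_univ u))
  have hne : Set.Nonempty {k | ∃ Mc : Finset (Sym2 V), IsKMatchingCover G k Mc} := ⟨2, hS2⟩
  have hmem := Nat.sInf_mem hne
  have hle : sInf {k | ∃ Mc : Finset (Sym2 V), IsKMatchingCover G k Mc} ≤ 2 :=
    Nat.sInf_le hS2
  have h0 : sInf {k | ∃ Mc : Finset (Sym2 V), IsKMatchingCover G k Mc} ≠ 0 := by
    intro h
    rw [h] at hmem
    exact hS0 hmem
  have h1 : sInf {k | ∃ Mc : Finset (Sym2 V), IsKMatchingCover G k Mc} ≠ 1 := by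
    intro h
    rw [h] at hmem
    exact hS1 hmem
  refine ⟨M, N, hM, hN₁sub, hNmatch, hcovall, ?_⟩
  show sInf {k | ∃ Mc : Finset (Sym2 V), IsKMatchingCover G k Mc} = 2
  omega
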